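/- Let (Ω, F, P) be a probability space, A a random variable taking values in a finite set S, and Y, Ŷ : Ω → ℝ^d square-integrable random vectors. Then E‖Y − Ŷ‖² ≥ Σ_{s ∈ S, P(A = s) > 0} P(A = s) · W₂²(law of Y under the conditional measure P(· | A = s), law of Ŷ under P(· | A = s)). -/

import Mathlib

open MeasureTheory ProbabilityTheory
open scoped Classical

/-- Squared Wasserstein-2 distance between two measures, as the infimum of the
expected squared distance over all couplings. -/
noncomputable def W2sq {E : Type*} [NormedAddCommGroup E] [MeasurableSpace E]
    (μ ν : Measure E) : ℝ :=
  sInf { c : ℝ | ∃ π : Measure (E × E), IsProbabilityMeasure π ∧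
    π.map Prod.fst = μ ∧ π.map Prod.snd = ν ∧ c = ∫ p, ‖p.1 - p.2‖ ^ 2 ∂π }

/-!
The law of total expectation over the fibres of `A` splits `E‖Y − Ŷ‖²` into
`∑ₛ P(A = s) · E[‖Y − Ŷ‖² | A = s]`. On each fibre of positive probability the joint law of
`(Y, Ŷ)` under `P(· | A = s)` is a coupling of the two conditional laws, so its cost dominates
their `W₂²`.
-/

lemma W2sq_map_le_integral_norm_sub_sq {Ω E : Type*} [MeasurableSpace Ω]
    [NormedAddCommGroup E] [MeasurableSpace E] [OpensMeasurableSpace E] [MeasurableSub₂ E]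
    (μ : Measure Ω) [IsProbabilityMeasure μ] {X Y : Ω → E}
    (hX : AEMeasurable X μ) (hY : AEMeasurable Y μ) :
    W2sq (μ.map X) (μ.map Y) ≤ ∫ ω, ‖X ω - Y ω‖ ^ 2 ∂μ := by
  have hXY : AEMeasurable (fun ω => (X ω, Y ω)) μ := hX.prodMk hY
  have hcost : Measurable fun p : E × E => ‖p.1 - p.2‖ ^ 2 :=
    ((measurable_fst.sub measurable_snd).norm).pow_const 2
  refine csInf_le ⟨0, ?_⟩
    ⟨μ.map fun ω => (X ω, Y ω), Measure.isProbabilityMeasure_map hXY, ?_, ?_, ?_⟩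
  · rintro c ⟨π, -, -, -, rfl⟩
    exact integral_nonneg fun p => by positivity
  · rw [AEMeasurable.map_map_of_aemeasurable measurable_fst.aemeasurable hXY]; rfl
  · rw [AEMeasurable.map_map_of_aemeasurable measurable_snd.aemeasurable hXY]; rfl
  · rw [integral_map hXY hcost.aestronglyMeasurable]

lemma integral_eq_sum_measure_fiber_mul_integral_cond {Ω S : Type*} [MeasurableSpace Ω]
    [Fintype S] [MeasurableSpace S] [MeasurableSingletonClass S] {A : Ω → S} (hA : Measurable A)
    (μ : Measure Ω) [IsFiniteMeasure μ] {f : Ω → ℝ} (hf : Integrable f μ) :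
    ∫ ω, f ω ∂μ = ∑ s, (μ (A ⁻¹' {s})).toReal * ∫ ω, f ω ∂μ[|A ⁻¹' {s}] := by
  rw [← sum_meas_smul_cond_fiber hA μ] at hf
  conv_lhs => rw [← sum_meas_smul_cond_fiber hA μ]
  rw [integral_finsetSum_measure fun s _ => (integrable_finsetSum_measure.1 hf) s (by simp)]
  simp only [integral_smul_measure, smul_eq_mul]

theorem statement3 {Ω : Type*} {F : MeasurableSpace Ω} (P : Measure Ω) [IsProbabilityMeasure P]
    {S : Type*} [Fintype S] [MeasurableSpace S] [MeasurableSingletonClass S]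
    (A : Ω → S) (hA : Measurable A) {d : ℕ}
    (Y Yhat : Ω → EuclideanSpace ℝ (Fin d)) (hY : MemLp Y 2 P) (hYhat : MemLp Yhat 2 P) :
    ∫ ω, ‖Y ω - Yhat ω‖ ^ 2 ∂P ≥
      ∑ s ∈ Finset.univ.filter (fun s : S => 0 < P (A ⁻¹' {s})),
        (P (A ⁻¹' {s})).toReal *
          W2sq ((ProbabilityTheory.cond P (A ⁻¹' {s})).map Y)
            ((ProbabilityTheory.cond P (A ⁻¹' {s})).map Yhat) := by
  have hcost : Integrable (fun ω => ‖Y ω - Yhat ω‖ ^ 2) P :=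
    (hY.sub hYhat).integrable_norm_pow two_ne_zero
  rw [ge_iff_le, integral_eq_sum_measure_fiber_mul_integral_cond hA P hcost]
  calc _ ≤ ∑ s ∈ Finset.univ.filter (fun s : S => 0 < P (A ⁻¹' {s})),
          (P (A ⁻¹' {s})).toReal * ∫ ω, ‖Y ω - Yhat ω‖ ^ 2 ∂P[|A ⁻¹' {s}] := by
        refine Finset.sum_le_sum fun s hs => mul_le_mul_of_nonneg_left ?_ ENNReal.toReal_nonneg
        have := cond_isProbabilityMeasure (Finset.mem_filter.1 hs).2.ne'
        exact W2sq_map_le_integral_norm_sub_sq _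
          (hY.aemeasurable.mono_ac cond_absolutelyContinuous)
          (hYhat.aemeasurable.mono_ac cond_absolutelyContinuous)
    _ ≤ _ := Finset.sum_le_sum_of_subset_of_nonneg (Finset.filter_subset _ _)
        fun s _ _ => by positivity
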